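/- Duhamel's formula: let A(r) be a C¹ family of bounded self-adjoint operators on a Hilbert space. Then d/dr e^{−A(r)} = −∫_0^1 e^{−(1−s)A(r)} A'(r) e^{−sA(r)} ds, where the integral converges in operator norm. -/

import Mathlib

set_option maxHeartbeats 1000000
set_option synthInstance.maxHeartbeats 400000

open intervalIntegral

open NormedSpace Filter

lemma aux_hasDerivAt_prod {H : Type*} [NormedAddCommGroup H] [InnerProductSpace ℂ H]
    [CompleteSpace H] (x y : H →L[ℂ] H) (s : ℝ) :
    HasDerivAt (fun s : ℝ => exp (s • x) * exp ((1 - s) • y))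
      (exp (s • x) * (x - y) * exp ((1 - s) • y)) s := by
  have h1 : HasDerivAt (fun s : ℝ => exp (s • x)) (exp (s • x) * x) s :=
    hasDerivAt_exp_smul_const x s
  have h2 : HasDerivAt (fun s : ℝ => exp ((1 - s) • y))
      (-(y * exp ((1 - s) • y))) s := by
    have hg : HasDerivAt (fun u : ℝ => exp (u • y)) (y * exp ((1 - s) • y)) (1 - s) :=
      hasDerivAt_exp_smul_const' y (1 - s)
    have hh : HasDerivAt (fun s : ℝ => 1 - s) (-1) s := by
      simpa using (hasDerivAt_id s).const_sub 1
    have := hg.scomp s hh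
    simpa [Function.comp_def] using this
  have h3 : HasDerivAt (fun s : ℝ => exp (s • x) * exp ((1 - s) • y))
      (exp (s • x) * x * exp ((1 - s) • y) + exp (s • x) * -(y * exp ((1 - s) • y))) s :=
    h1.mul h2
  convert h3 using 1
  simp [mul_sub, sub_mul, mul_assoc]
  abel

lemma aux_duhamel_diff {H : Type*} [NormedAddCommGroup H] [InnerProductSpace ℂ H]
    [CompleteSpace H] (x y : H →L[ℂ] H) :
    exp x - exp y
      = ∫ s in (0:ℝ)..1, exp (s • x) * (x - y) * exp ((1 - s) • y) := by
  have hcont : Continuous fun s : ℝ => exp (s • x) * (x - y) * exp ((1 - s) • y) := by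
    have e1 : Continuous fun s : ℝ => exp (s • x) :=
      (let _ : NormedAlgebra ℚ (H →L[ℂ] H) := .restrictScalars ℚ ℂ _; exp_continuous).comp (continuous_id.smul continuous_const)
    have e2 : Continuous fun s : ℝ => exp ((1 - s) • y) :=
      (let _ : NormedAlgebra ℚ (H →L[ℂ] H) := .restrictScalars ℚ ℂ _; exp_continuous).comp ((continuous_const.sub continuous_id).smul continuous_const)
    exact (e1.mul continuous_const).mul e2
  have h := integral_eq_sub_of_hasDerivAt (fun s _ => aux_hasDerivAt_prod x y s)
    (hcont.intervalIntegrable 0 1)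
  rw [h]
  simp [exp_zero]

/-- Duhamel's formula: for a `C¹` family of bounded self-adjoint operators `A(r)`,
`d/dr e^{−A(r)} = −∫_0^1 e^{−(1−s)A(r)} A'(r) e^{−sA(r)} ds`. -/
theorem stmt_16 {H : Type*} [NormedAddCommGroup H] [InnerProductSpace ℂ H] [CompleteSpace H]
    (A A' : ℝ → (H →L[ℂ] H))
    (hA : ∀ r : ℝ, HasDerivAt A (A' r) r) (hA' : Continuous A')
    (hAsa : ∀ r : ℝ, IsSelfAdjoint (A r)) (r : ℝ) :
    HasDerivAt (fun r : ℝ => NormedSpace.exp (-(A r)))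
      (-(∫ s in (0:ℝ)..1,
          NormedSpace.exp (-((1 - s) • A r)) * A' r * NormedSpace.exp (-(s • A r)))) r := by
  set F : (H →L[ℂ] H) × (H →L[ℂ] H) → (H →L[ℂ] H) :=
    fun p => ∫ s in (0:ℝ)..1, exp (s • p.1) * p.2 * exp ((1 - s) • (-(A r))) with hF
  have hFc : Continuous F := by
    apply intervalIntegral.continuous_parametric_intervalIntegral_of_continuous'
    have e1 : Continuous fun q : ((H →L[ℂ] H) × (H →L[ℂ] H)) × ℝ => exp (q.2 • q.1.1) :=
      (let _ : NormedAlgebra ℚ (H →L[ℂ] H) := .restrictScalars ℚ ℂ _; exp_continuous).comp (continuous_snd.smul (continuous_fst.fst))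
    have e2 : Continuous fun q : ((H →L[ℂ] H) × (H →L[ℂ] H)) × ℝ =>
        exp ((1 - q.2) • (-(A r))) :=
      (let _ : NormedAlgebra ℚ (H →L[ℂ] H) := .restrictScalars ℚ ℂ _; exp_continuous).comp ((continuous_const.sub continuous_snd).smul continuous_const)
    exact (e1.mul continuous_fst.snd).mul e2
  rw [hasDerivAt_iff_tendsto_slope]
  have hslope : ∀ x ∈ ({r}ᶜ : Set ℝ),
      slope (fun t : ℝ => exp (-(A t))) r x
        = F (-(A x), slope (fun t : ℝ => -(A t)) r x) := by
    intro x hx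
    rw [slope_def_module, slope_def_module, hF]
    simp only
    rw [aux_duhamel_diff (-(A x)) (-(A r)), ← intervalIntegral.integral_smul]
    congr 1
    ext s
    rw [mul_smul_comm, smul_mul_assoc]
  have htend : Tendsto (fun x : ℝ => (-(A x), slope (fun t : ℝ => -(A t)) r x))
      (nhdsWithin r ({r}ᶜ : Set ℝ)) (nhds (-(A r), -(A' r))) := by
    apply Tendsto.prodMk_nhds
    · exact ((hA r).continuousAt.neg.tendsto).mono_left nhdsWithin_le_nhds
    · exact hasDerivAt_iff_tendsto_slope.mp (hA r).neg
  have key := (hFc.continuousAt.tendsto.comp htend).congr'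
    ((eventually_mem_nhdsWithin).mono fun x hx => (hslope x hx).symm)
  have hneg : ∀ s : ℝ, exp (s • -A r) * -A' r * exp ((1 - s) • -A r)
      = -(exp (-(s • A r)) * A' r * exp (-((1 - s) • A r))) := by
    intro s
    simp [smul_neg, mul_neg, neg_mul]
  have hFval : F (-(A r), -(A' r))
      = -(∫ s in (0:ℝ)..1, exp (-((1 - s) • A r)) * A' r * exp (-(s • A r))) := by
    rw [hF]
    simp only
    rw [intervalIntegral.integral_congr (fun s _ => hneg s), intervalIntegral.integral_neg]
    congr 1
    have hsub := intervalIntegral.integral_comp_sub_left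
      (a := 0) (b := 1) (fun s : ℝ => exp (-((1 - s) • A r)) * A' r * exp (-(s • A r))) 1
    rw [show (1:ℝ) - 1 = 0 by norm_num, show (1:ℝ) - 0 = 1 by norm_num] at hsub
    rw [← hsub]
    apply intervalIntegral.integral_congr
    intro s _
    simp [sub_sub_cancel]
  rw [← hFval]
  exact key
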